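/- Let m and n be positive integers and let a, b be real numbers with a > 0 and b+1−m−n−a > 0. Then Σ_{k=0}^{∞} (m)_k (n)_k (a)_k / ((b)_k · (k!)²) = [Γ(n)·Γ(b) / (Γ(m)·Γ(a)·Γ(b−m)·Γ(b−a))] · Σ_{k=0}^{n−1} Γ(m+k)·Γ(a+k)·Γ(b−k−m−a) / ((k!)² · Γ(n−k)). -/

import Mathlib

open scoped BigOperators
open Finset

/-- Pochhammer (ascending factorial) `(x)_k = x (x+1) ⋯ (x+k-1)`. -/
noncomputable def poch (x : ℝ) (k : ℕ) : ℝ := Polynomial.eval x (ascPochhammer ℝ k)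

/-!
Since `(n)_k / k! = C(n-1+k, k) = ∑_{j<n} C(n-1, j) C(k, j)` (Vandermonde), the `₃F₂` splits
into the `n` series `∑_k C(k, j) (m)_k (a)_k / ((b)_k k!)`. Shifting `k` by `j` turns the
`j`-th one into `(m)_j (a)_j / ((b)_j j!) · ₂F₁(m+j, a+j; b+j; 1)`, which Gauss's summation
evaluates. For an integer upper parameter, `₂F₁(m, y; z; 1) = (z-m)_m / (z-m-y)_m` follows by
induction on `m`: the base case `m = 1` and the step `m → m + 1` are telescoping sums, whose
boundary terms vanish because `(x)_k (y)_k / ((z)_k k!) ~ Γ(z) / (Γ(x) Γ(y)) · k^(x+y-z-1)`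
by Euler's limit formula for `Γ`.
-/

open Filter Topology Asymptotics
open scoped Nat

lemma poch_zero (x : ℝ) : poch x 0 = 1 := by simp [poch]

lemma poch_succ (x : ℝ) (k : ℕ) : poch x (k + 1) = poch x k * (x + k) :=
  ascPochhammer_succ_eval k x

lemma poch_succ_left (x : ℝ) (k : ℕ) : poch x (k + 1) = x * poch (x + 1) k := by
  simp [poch, ascPochhammer_succ_left, Polynomial.eval_comp]

lemma poch_add (x : ℝ) (j k : ℕ) : poch x (j + k) = poch x j * poch (x + j) k := by
  simp [poch, ← ascPochhammer_mul, Polynomial.eval_comp]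

lemma poch_pos {x : ℝ} (hx : 0 < x) (k : ℕ) : 0 < poch x k := ascPochhammer_pos k x hx

lemma poch_eq_prod (x : ℝ) (k : ℕ) : poch x k = ∏ j ∈ range k, (x + j) := by
  induction k with
  | zero => simp [poch_zero]
  | succ k ih => rw [poch_succ, ih, prod_range_succ]

lemma poch_eq_Gamma_div {x : ℝ} (hx : 0 < x) (k : ℕ) :
    poch x k = Real.Gamma (x + k) / Real.Gamma x := by
  induction k with
  | zero => simp [poch_zero, (Real.Gamma_pos_of_pos hx).ne']
  | succ k ih =>
    rw [poch_succ, ih, Nat.cast_succ, ← add_assoc, Real.Gamma_add_one (by positivity)]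
    ring

lemma poch_natCast_succ (N k : ℕ) : poch ((N + 1 : ℕ) : ℝ) k = k ! * (N + k).choose k := by
  rw [poch, ← Nat.cast_ascFactorial, Nat.ascFactorial_eq_factorial_mul_choose, Nat.cast_mul]

lemma choose_add_eq_sum_choose_mul_choose (N k : ℕ) :
    (N + k).choose k = ∑ j ∈ range (N + 1), N.choose j * k.choose j := by
  rw [← Nat.choose_symm_add, Nat.add_choose_eq, Nat.sum_antidiagonal_eq_sum_range_succ_mk,
    ← sum_range_reflect]
  refine sum_congr rfl fun j hj => ?_
  have hj : j ≤ N := Nat.lt_succ_iff.mp (mem_range.mp hj)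
  simp only [Nat.succ_sub_one, Nat.sub_sub_self hj, Nat.choose_symm hj]

lemma poch_natCast_succ_div_factorial (N k : ℕ) :
    poch ((N + 1 : ℕ) : ℝ) k / k ! = ∑ j ∈ range (N + 1), (N.choose j : ℝ) * k.choose j := by
  rw [poch_natCast_succ, choose_add_eq_sum_choose_mul_choose,
    mul_div_cancel_left₀ _ (by positivity)]
  push_cast
  rfl

lemma tendsto_rpow_mul_factorial_div_poch {s : ℝ} (hs : 0 < s) :
    Tendsto (fun k : ℕ => (k : ℝ) ^ (s - 1) * k ! / poch s k) atTop (𝓝 (Real.Gamma s)) := by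
  have hlim : Tendsto (fun k : ℕ => 1 + s / k) atTop (𝓝 1) := by
    simpa using (tendsto_const_div_atTop_nhds_zero_nat s).const_add 1
  have := (Real.GammaSeq_tendsto_Gamma s).mul hlim
  rw [mul_one] at this
  refine this.congr' ?_
  filter_upwards [eventually_gt_atTop 0] with k hk
  have hk' : (0 : ℝ) < k := by exact_mod_cast hk
  have := (poch_pos hs k).ne'
  rw [Real.GammaSeq, ← poch_eq_prod, poch_succ, Real.rpow_sub_one hk'.ne']
  field_simp
  ring

lemma isBigO_pow_mul_of_tendsto_mul_rpow {f : ℕ → ℝ} {p L : ℝ}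
    (h : Tendsto (fun k => f k * (k : ℝ) ^ p) atTop (𝓝 L)) (j : ℕ) :
    (fun k : ℕ => (k : ℝ) ^ j * f k) =O[atTop] fun k : ℕ => (k : ℝ) ^ ((j : ℝ) - p) := by
  refine ((h.isBigO_one ℝ).mul (isBigO_refl (fun k : ℕ => (k : ℝ) ^ ((j : ℝ) - p)) atTop)).congr'
    ?_ (by simp)
  filter_upwards [eventually_gt_atTop 0] with k hk
  have hk' : (0 : ℝ) < k := by exact_mod_cast hk
  rw [Real.rpow_sub hk', Real.rpow_natCast]
  have := (Real.rpow_pos_of_pos hk' p).ne'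
  field_simp

lemma summable_pow_mul_of_tendsto_mul_rpow {f : ℕ → ℝ} {p L : ℝ}
    (h : Tendsto (fun k => f k * (k : ℝ) ^ p) atTop (𝓝 L)) {j : ℕ} (hj : j + 1 < p) :
    Summable fun k : ℕ => (k : ℝ) ^ j * f k :=
  summable_of_isBigO_nat (Real.summable_nat_rpow.2 (by linarith))
    (isBigO_pow_mul_of_tendsto_mul_rpow h j)

lemma tendsto_pow_mul_of_tendsto_mul_rpow {f : ℕ → ℝ} {p L : ℝ}
    (h : Tendsto (fun k => f k * (k : ℝ) ^ p) atTop (𝓝 L)) {j : ℕ} (hj : j < p) :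
    Tendsto (fun k : ℕ => (k : ℝ) ^ j * f k) atTop (𝓝 0) := by
  refine (isBigO_pow_mul_of_tendsto_mul_rpow h j).trans_tendsto ?_
  have := (tendsto_rpow_neg_atTop (by linarith : 0 < p - j)).comp tendsto_natCast_atTop_atTop
  simpa [Function.comp_def] using this

lemma hasSum_sub_succ_of_tendsto_zero {v : ℕ → ℝ} (hs : Summable fun k => v k - v (k + 1))
    (hv : Tendsto v atTop (𝓝 0)) : HasSum (fun k => v k - v (k + 1)) (v 0) :=
  hs.hasSum_iff_tendsto_nat.2 <| by
    simpa only [sum_range_sub', sub_zero] using tendsto_const_nhds.sub hv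

noncomputable def gaussTerm (x y z : ℝ) (k : ℕ) : ℝ := poch x k * poch y k / (poch z k * k !)

lemma gaussTerm_zero (x y z : ℝ) : gaussTerm x y z 0 = 1 := by simp [gaussTerm, poch_zero]

lemma succ_mul_gaussTerm_succ (x y z : ℝ) {k : ℕ} (hz : z + k ≠ 0) :
    (k + 1) * (z + k) * gaussTerm x y z (k + 1) = (x + k) * (y + k) * gaussTerm x y z k := by
  simp only [gaussTerm, poch_succ, Nat.factorial_succ]
  push_cast
  field_simp

lemma mul_gaussTerm_add_one (x y z : ℝ) (k : ℕ) :
    x * gaussTerm (x + 1) y z k = (x + k) * gaussTerm x y z k := by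
  have h : x * poch (x + 1) k = (x + k) * poch x k := by
    rw [← poch_succ_left, poch_succ, mul_comm]
  simp only [gaussTerm]
  linear_combination (poch y k / (poch z k * k !)) * h

lemma choose_mul_gaussTerm_add (x y z : ℝ) (j k : ℕ) :
    ((j + k).choose j : ℝ) * gaussTerm x y z (j + k) =
      gaussTerm x y z j * gaussTerm (x + j) (y + j) (z + j) k := by
  have hfac : ((j + k).choose j : ℝ) * j ! * k ! = (j + k)! := by
    rw [Nat.choose_symm_add]
    exact_mod_cast Nat.add_choose_mul_factorial_mul_factorial j k
  simp only [gaussTerm, poch_add]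
  rw [← hfac]
  have := (Nat.choose_pos (Nat.le_add_right j k)).ne'
  field_simp

section Gauss

variable {x y z : ℝ}

lemma tendsto_gaussTerm_mul_rpow (hx : 0 < x) (hy : 0 < y) (hz : 0 < z) :
    Tendsto (fun k : ℕ => gaussTerm x y z k * (k : ℝ) ^ (1 + z - x - y)) atTop
      (𝓝 (Real.Gamma z / (Real.Gamma x * Real.Gamma y))) := by
  have := (tendsto_rpow_mul_factorial_div_poch hz).div
    ((tendsto_rpow_mul_factorial_div_poch hx).mul (tendsto_rpow_mul_factorial_div_poch hy))
    (mul_pos (Real.Gamma_pos_of_pos hx) (Real.Gamma_pos_of_pos hy)).ne'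
  refine this.congr' ?_
  filter_upwards [eventually_gt_atTop 0] with k hk
  have hk' : (0 : ℝ) < k := by exact_mod_cast hk
  simp only [Pi.div_apply]
  rw [show z - 1 = (1 + z - x - y) + (x - 1) + (y - 1) by ring, Real.rpow_add hk',
    Real.rpow_add hk']
  have := (poch_pos hx k).ne'
  have := (poch_pos hy k).ne'
  have := (Real.rpow_pos_of_pos hk' (x - 1)).ne'
  have := (Real.rpow_pos_of_pos hk' (y - 1)).ne'
  simp only [gaussTerm]
  field_simp

lemma summable_gaussTerm (hx : 0 < x) (hy : 0 < y) (hxyz : x + y < z) :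
    Summable (gaussTerm x y z) := by
  simpa using summable_pow_mul_of_tendsto_mul_rpow
    (tendsto_gaussTerm_mul_rpow hx hy (by linarith)) (j := 0) (by push_cast; linarith)

lemma hasSum_gaussTerm_one (hy : 0 < y) (hyz : y + 1 < z) :
    HasSum (gaussTerm 1 y z) ((z - 1) / (z - 1 - y)) := by
  have hz : 0 < z := by linarith
  have hdecay := tendsto_gaussTerm_mul_rpow one_pos hy hz
  set v : ℕ → ℝ := fun k => (z - 1 + k) * gaussTerm 1 y z k
  have htel : ∀ k : ℕ, v k - v (k + 1) = (z - 1 - y) * gaussTerm 1 y z k := by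
    intro k
    have hk : (k : ℝ) + 1 ≠ 0 := by positivity
    have hrec := succ_mul_gaussTerm_succ 1 y z (k := k) (by positivity)
    rw [add_comm (1 : ℝ), mul_assoc, mul_assoc] at hrec
    simp only [v]
    push_cast
    linear_combination -(mul_left_cancel₀ hk hrec)
  have hv : Tendsto v atTop (𝓝 0) := by
    have h0 := tendsto_pow_mul_of_tendsto_mul_rpow hdecay (j := 0) (by push_cast; linarith)
    have h1 := tendsto_pow_mul_of_tendsto_mul_rpow hdecay (j := 1) (by push_cast; linarith)
    have := (h0.const_mul (z - 1)).add h1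
    simpa [v, add_mul] using this
  have hsum : Summable fun k => v k - v (k + 1) := by
    simpa only [htel] using (summable_gaussTerm one_pos hy (by linarith)).mul_left (z - 1 - y)
  have htel_sum := hasSum_sub_succ_of_tendsto_zero hsum hv
  simp only [htel, v, gaussTerm_zero, CharP.cast_eq_zero, add_zero, mul_one] at htel_sum
  rw [← hasSum_mul_left_iff (by linarith : z - 1 - y ≠ 0), mul_div_cancel₀ _ (by linarith)]
  exact htel_sum

lemma hasSum_natCast_mul_gaussTerm (hx : 0 < x) (hy : 0 < y) (hxyz : x + y + 1 < z) {s : ℝ}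
    (hs : HasSum (gaussTerm x y z) s) :
    HasSum (fun k : ℕ => (k : ℝ) * gaussTerm x y z k) (x * y * s / (z - 1 - x - y)) := by
  have hz : 0 < z := by linarith
  have hdecay := tendsto_gaussTerm_mul_rpow hx hy hz
  have hsum : Summable fun k : ℕ => (k : ℝ) * gaussTerm x y z k := by
    simpa using summable_pow_mul_of_tendsto_mul_rpow hdecay (j := 1) (by push_cast; linarith)
  set v : ℕ → ℝ := fun k => k * (z - 1 + k) * gaussTerm x y z k
  have htel : ∀ k : ℕ, v k - v (k + 1) =
      (z - 1 - x - y) * (k * gaussTerm x y z k) - x * y * gaussTerm x y z k := by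
    intro k
    have hrec := succ_mul_gaussTerm_succ x y z (k := k) (by positivity)
    simp only [v]
    push_cast
    linear_combination -hrec
  have hv : Tendsto v atTop (𝓝 0) := by
    have h1 := tendsto_pow_mul_of_tendsto_mul_rpow hdecay (j := 1) (by push_cast; linarith)
    have h2 := tendsto_pow_mul_of_tendsto_mul_rpow hdecay (j := 2) (by push_cast; linarith)
    have := (h1.const_mul (z - 1)).add h2
    rw [mul_zero, add_zero] at this
    refine this.congr fun k => ?_
    simp only [v]
    ring
  have htel_sum := hasSum_sub_succ_of_tendsto_zero
    (by simpa only [htel] using (hsum.mul_left (z - 1 - x - y)).sub (hs.summable.mul_left (x * y)))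
    hv
  simp only [htel, v, CharP.cast_eq_zero, zero_mul] at htel_sum
  have := htel_sum.add (hs.mul_left (x * y))
  simp only [sub_add_cancel, zero_add] at this
  rw [← hasSum_mul_left_iff (by linarith : z - 1 - x - y ≠ 0), mul_div_cancel₀ _ (by linarith)]
  exact this

lemma hasSum_gaussTerm_add_one (hx : 0 < x) (hy : 0 < y) (hxyz : x + y + 1 < z) {s : ℝ}
    (hs : HasSum (gaussTerm x y z) s) :
    HasSum (gaussTerm (x + 1) y z) (s * (z - 1 - x) / (z - 1 - x - y)) := by
  have hfun : (fun k : ℕ => x * gaussTerm (x + 1) y z k) =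
      fun k => x * gaussTerm x y z k + k * gaussTerm x y z k :=
    funext fun k => by rw [mul_gaussTerm_add_one, add_mul]
  have hval : x * (s * (z - 1 - x) / (z - 1 - x - y)) = x * s + x * y * s / (z - 1 - x - y) := by
    have : z - 1 - x - y ≠ 0 := by linarith
    field_simp
    ring
  rw [← hasSum_mul_left_iff hx.ne', hfun, hval]
  exact (hs.mul_left x).add (hasSum_natCast_mul_gaussTerm hx hy hxyz hs)

lemma hasSum_gaussTerm_natCast {m : ℕ} (hm : 0 < m) (hy : 0 < y) (hmyz : m + y < z) :
    HasSum (gaussTerm m y z) (poch (z - m) m / poch (z - m - y) m) := by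
  induction m, hm using Nat.le_induction with
  | base =>
    simpa [poch_succ, poch_zero] using hasSum_gaussTerm_one hy (by push_cast at hmyz; linarith)
  | succ m hm ih =>
    push_cast at hmyz ⊢
    convert hasSum_gaussTerm_add_one (by positivity) hy (by linarith) (ih (by linarith)) using 1
    rw [poch_succ_left (z - (m + 1)), poch_succ_left (z - (m + 1) - y)]
    have := (poch_pos (by linarith : 0 < z - m) m).ne'
    have := (poch_pos (by linarith : 0 < z - m - y) m).ne'
    have : z - 1 - m - y ≠ 0 := by linarith
    ring_nf
    field_simp
    ring

lemma hasSum_choose_mul_gaussTerm (j : ℕ) {s : ℝ}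
    (hs : HasSum (gaussTerm (x + j) (y + j) (z + j)) s) :
    HasSum (fun k : ℕ => (k.choose j : ℝ) * gaussTerm x y z k) (gaussTerm x y z j * s) := by
  have hshift : HasSum (fun k : ℕ => ((k + j).choose j : ℝ) * gaussTerm x y z (k + j))
      (gaussTerm x y z j * s) := by
    have hfun : (fun k : ℕ => ((k + j).choose j : ℝ) * gaussTerm x y z (k + j)) =
        fun k => gaussTerm x y z j * gaussTerm (x + j) (y + j) (z + j) k :=
      funext fun k => by rw [add_comm k j, choose_mul_gaussTerm_add]
    rw [hfun]
    exact hs.mul_left _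
  have hvanish : ∑ k ∈ range j, (k.choose j : ℝ) * gaussTerm x y z k = 0 :=
    sum_eq_zero fun k hk => by
      rw [Nat.choose_eq_zero_of_lt (mem_range.mp hk), Nat.cast_zero, zero_mul]
  have := (hasSum_nat_add_iff (f := fun k : ℕ => (k.choose j : ℝ) * gaussTerm x y z k) j).1 hshift
  rwa [hvanish, add_zero] at this

end Gauss

lemma choose_eq_Gamma_div {N j : ℕ} (hj : j ≤ N) :
    (N.choose j : ℝ) = Real.Gamma (N + 1) / (j ! * Real.Gamma (N + 1 - j)) := by
  rw [Nat.cast_choose ℝ hj, Real.Gamma_nat_eq_factorial,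
    show (N : ℝ) + 1 - j = (N - j : ℕ) + 1 by push_cast [Nat.cast_sub hj]; ring,
    Real.Gamma_nat_eq_factorial]

lemma gaussTerm_mul_poch_div_poch_eq_Gamma {m : ℕ} (hm : 0 < m) {a b : ℝ} (ha : 0 < a) {j : ℕ}
    (hj : 0 < b - m - a - j) :
    gaussTerm m a b j * (poch (b - m) (m + j) / poch (b - m - a - j) (m + j)) =
      Real.Gamma b / (Real.Gamma m * Real.Gamma a * Real.Gamma (b - m) * Real.Gamma (b - a)) *
        (Real.Gamma (m + j) * Real.Gamma (a + j) * Real.Gamma (b - j - m - a) / j !) := by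
  have hm' : (0 : ℝ) < m := by exact_mod_cast hm
  have hj0 : (0 : ℝ) ≤ j := j.cast_nonneg
  rw [gaussTerm, poch_eq_Gamma_div hm', poch_eq_Gamma_div ha, poch_eq_Gamma_div (by linarith),
    poch_eq_Gamma_div (by linarith : 0 < b - m), poch_eq_Gamma_div hj, Nat.cast_add,
    show b - m + (m + j) = b + j by ring, show b - m - a - j + (m + j) = b - a by ring,
    show b - j - m - a = b - m - a - j by ring]
  have := (Real.Gamma_pos_of_pos hm').ne'
  have := (Real.Gamma_pos_of_pos ha).ne'
  have := (Real.Gamma_pos_of_pos (by linarith : 0 < b)).ne'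
  have := (Real.Gamma_pos_of_pos (by linarith : 0 < b + j)).ne'
  have := (Real.Gamma_pos_of_pos (by linarith : 0 < b - m)).ne'
  have := (Real.Gamma_pos_of_pos (by linarith : 0 < b - a)).ne'
  have := (Real.Gamma_pos_of_pos hj).ne'
  field_simp

/-- The evaluation of `₃F₂(m, n, a; b, 1; 1)` via Karlsson's transformation. -/
theorem karlsson_transformed (m n : ℕ) (hm : 0 < m) (hn : 0 < n) (a b : ℝ)
    (ha : a > 0) (hconv : b + 1 - (m : ℝ) - (n : ℝ) - a > 0) :
    ∑' k : ℕ,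
        poch (m : ℝ) k * poch (n : ℝ) k * poch a k /
          (poch b k * ((k.factorial : ℝ)) ^ 2) =
      Real.Gamma (n : ℝ) * Real.Gamma b /
          (Real.Gamma (m : ℝ) * Real.Gamma a * Real.Gamma (b - (m : ℝ)) *
            Real.Gamma (b - a)) *
        ∑ k ∈ range n,
          Real.Gamma ((m : ℝ) + (k : ℝ)) * Real.Gamma (a + (k : ℝ)) *
              Real.Gamma (b - (k : ℝ) - (m : ℝ) - a) /
            (((k.factorial : ℝ)) ^ 2 * Real.Gamma ((n : ℝ) - (k : ℝ))) := by
  obtain ⟨N, rfl⟩ : ∃ N, n = N + 1 := ⟨n - 1, by omega⟩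
  have hrange : ∀ j ∈ range (N + 1), j ≤ N ∧ 0 < b - m - a - j := fun j hj => by
    have hjN := Nat.lt_succ_iff.mp (mem_range.mp hj)
    have : (j : ℝ) ≤ N := by exact_mod_cast hjN
    exact ⟨hjN, by push_cast at hconv; linarith⟩
  have hexpand : ∀ k : ℕ, poch (m : ℝ) k * poch ((N + 1 : ℕ) : ℝ) k * poch a k /
      (poch b k * (k ! : ℝ) ^ 2) =
      ∑ j ∈ range (N + 1), (N.choose j : ℝ) * ((k.choose j : ℝ) * gaussTerm m a b k) := by
    intro k
    simp_rw [← mul_assoc, ← sum_mul, ← poch_natCast_succ_div_factorial, gaussTerm]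
    ring
  have hsum : ∀ j ∈ range (N + 1),
      HasSum (fun k : ℕ => (N.choose j : ℝ) * ((k.choose j : ℝ) * gaussTerm m a b k))
        ((N.choose j : ℝ) * (gaussTerm m a b j *
          (poch (b - m) (m + j) / poch (b - m - a - j) (m + j)))) := by
    intro j hj
    refine (hasSum_choose_mul_gaussTerm j ?_).mul_left _
    convert hasSum_gaussTerm_natCast (m := m + j) (y := a + j) (z := b + j) (by omega)
      (by positivity) (by push_cast; linarith [(hrange j hj).2]) using 2 <;> push_cast <;> ring_nf
  rw [tsum_congr hexpand, (hasSum_sum hsum).tsum_eq, mul_sum]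
  refine sum_congr rfl fun j hj => ?_
  rw [choose_eq_Gamma_div (hrange j hj).1,
    gaussTerm_mul_poch_div_poch_eq_Gamma hm ha (hrange j hj).2]
  push_cast
  ring
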